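/- The output λ_F of the adapted firm-copies-proposing deferred acceptance algorithm in the associated one-to-one market is a stable* matching; in particular, the set of stable* matchings is nonempty. -/

import Mathlib

open Classical

noncomputable section

/- The associated one-to-one market: firm `i : ι` has copies indexed by
`Fin (J i)`; firm-copies have linear preferences `Pf f` over `Option W`
(`none` = `∅`, larger = better); workers have linear preferences `Pw w` over
`Option (Σ i, Fin (J i))`, which refine a linear preference `PwFirm w` over the
firms (`Option ι`): all copies of a preferred firm rank above all copies of a
less preferred firm, and copies of the same firm are ranked by index. -/

/-- The best element of a finite set of alternatives (`none` included) with
respect to a linear order `L`. -/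
def bestOf {α : Type*} (L : LinearOrder (Option α)) (s : Finset (Option α)) :
    Option α :=
  WithBot.unbotD none (@Finset.max (Option α) L s)

/-- State of the deferred acceptance algorithm: the current tentative matching
(from the firm-copies' side) and, for each firm-copy, the set of workers that
have rejected it so far. -/
structure DAState (ι W : Type*) (J : ι → ℕ) where
  lam : (Σ i : ι, Fin (J i)) → Option W
  rej : (Σ i : ι, Fin (J i)) → Finset W

variable {ι W : Type*} [Fintype ι] [DecidableEq ι] [Fintype W] [DecidableEq W]
  {J : ι → ℕ}

/-- The offer made by firm-copy `f` at the current stage: if `f` is unmatched,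
it targets its best acceptable worker among those who have not rejected it yet,
and it is *authorized* to make this offer only if no other copy of the same
firm currently holds a worker that `f` strictly prefers. -/
def proposalF [Fintype ι] [∀ i : ι, Fintype (Fin (J i))]
    (Pf : (Σ i : ι, Fin (J i)) → LinearOrder (Option W))
    (st : DAState ι W J) (f : Σ i : ι, Fin (J i)) : Option W :=
  if st.lam f ≠ none then none
  else
    match bestOf (Pf f)
        (insert none ((Finset.univ.filter (fun w : W => w ∉ st.rej f)).image some)) with
    | none => none
    | some w =>
        if ∀ (j' : Fin (J f.1)) (w' : W),
            st.lam ⟨f.1, j'⟩ = some w' → ¬ (Pf f).lt (some w) (some w')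
        then some w else none

/-- The firm-copy (if any) tentatively selected by worker `w`: the best, with
respect to `Pw w`, among the copies currently offering to `w`, her current
partner, and `∅`. -/
def chosenByWorker
    (Pf : (Σ i : ι, Fin (J i)) → LinearOrder (Option W))
    (Pw : W → LinearOrder (Option (Σ i : ι, Fin (J i))))
    (st : DAState ι W J) (w : W) : Option (Σ i : ι, Fin (J i)) :=
  bestOf (Pw w)
    (insert none
      ((Finset.univ.filter
        (fun f : Σ i : ι, Fin (J i) =>
          proposalF Pf st f = some w ∨ st.lam f = some w)).image some))

/-- One stage of the adapted firm-copies-proposing deferred acceptance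
algorithm. -/
def stepF
    (Pf : (Σ i : ι, Fin (J i)) → LinearOrder (Option W))
    (Pw : W → LinearOrder (Option (Σ i : ι, Fin (J i))))
    (st : DAState ι W J) : DAState ι W J where
  lam := fun f =>
    if h : ∃ w : W, chosenByWorker Pf Pw st w = some f then some h.choose
    else none
  rej := fun f =>
    st.rej f ∪
      Finset.univ.filter
        (fun w : W =>
          (proposalF Pf st f = some w ∨ st.lam f = some w) ∧
            chosenByWorker Pf Pw st w ≠ some f)

/-- The output `λ_F` of the adapted firm-copies-proposing deferred acceptance
algorithm (run for sufficiently many stages so that it has terminated). -/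
def daOutputF
    (Pf : (Σ i : ι, Fin (J i)) → LinearOrder (Option W))
    (Pw : W → LinearOrder (Option (Σ i : ι, Fin (J i)))) :
    (Σ i : ι, Fin (J i)) → Option W :=
  ((stepF Pf Pw)^[(Fintype.card (Σ i : ι, Fin (J i)) * Fintype.card W + 1) *
      (Fintype.card (Σ i : ι, Fin (J i)) + Fintype.card W + 2)]
    ⟨fun _ => none, fun _ => ∅⟩).lam

/-- The worker-side of the output matching. -/
def daOutputFW
    (Pf : (Σ i : ι, Fin (J i)) → LinearOrder (Option W))
    (Pw : W → LinearOrder (Option (Σ i : ι, Fin (J i)))) (w : W) :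
    Option (Σ i : ι, Fin (J i)) :=
  if h : ∃ f : Σ i : ι, Fin (J i), daOutputF Pf Pw f = some w then some h.choose
  else none


end

/-! The firm-copies-proposing run keeps six invariants: a held worker has not rejected her
holder and the two find each other acceptable; a firm-copy has been rejected by every worker it
prefers to the one it holds; a worker who rejected `f` finds `f` unacceptable or holds a copy she
prefers to `f`; and no copy prefers the worker held by another copy of its firm. Only the last one
needs condition (1). If a copy newly wins, by proposing, a worker `w'` whom its sibling `f`
prefers to its own worker, then `w'` has rejected `f` and so holds a copy ranked above `f` and
below the copy she now picks. By condition (1) that copy is a third sibling, and `f` could not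
envy it before the step, neither as a holder nor as a proposer.

Every step that changes the state adds a rejection or, adding none, keeps every held pair and
matches a new copy; this bounds the number of stages before a fixed point. There no copy
proposes any more, and the invariants become the stability* conditions. -/

open Finset Function

section BestOf

variable {α : Type*} (L : LinearOrder (Option α))

lemma bestOf_eq_max' {s : Finset (Option α)} (hs : s.Nonempty) :
    bestOf L s = @Finset.max' _ L s hs := by
  let _ := L
  rw [bestOf, ← Finset.coe_max' hs]
  rfl

lemma le_bestOf {s : Finset (Option α)} {x : Option α} (hx : x ∈ s) :
    L.le x (bestOf L s) := by
  let _ := L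
  rw [bestOf_eq_max' L ⟨x, hx⟩]
  exact s.le_max' x hx

variable [DecidableEq (Option α)]

lemma none_le_bestOf (s : Finset (Option α)) : L.le none (bestOf L (insert none s)) :=
  le_bestOf L (mem_insert_self _ _)

lemma some_le_bestOf {t : Finset α} {a : α} (ha : a ∈ t) :
    L.le (some a) (bestOf L (insert none (t.image some))) :=
  le_bestOf L (mem_insert_of_mem (mem_image_of_mem _ ha))

lemma mem_of_bestOf_eq_some {t : Finset α} {a : α}
    (h : bestOf L (insert none (t.image some)) = some a) : a ∈ t := by
  let _ := L
  have hmem := h ▸ (bestOf_eq_max' L (insert_nonempty none _) ▸ max'_mem _ _)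
  simpa using hmem

end BestOf

theorem isFixedPt_iterate_of_potential {α : Type*} {g : α → α} {p : α → Prop} {pot : α → ℕ}
    {n : ℕ} (hp : ∀ x, p x → p (g x)) (hpot : ∀ x, p x → g x ≠ x → pot x < pot (g x))
    (hn : ∀ x, pot x < n) {x : α} (hx : p x) : IsFixedPt g (g^[n] x) := by
  have hk : ∀ k, IsFixedPt g (g^[k] x) ∨ k ≤ pot (g^[k] x) := by
    intro k
    induction k with
    | zero => exact Or.inr (Nat.zero_le _)
    | succ k ih =>
      rw [iterate_succ_apply']
      by_cases hfix : IsFixedPt g (g^[k] x)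
      · exact Or.inl hfix.apply
      · have := hpot _ (Iterate.rec p hx hp k) hfix
        exact Or.inr ((ih.resolve_left hfix).trans_lt this)
  exact (hk n).resolve_right (hn _).not_ge

section AssociatedMarket

variable {ι W : Type*} {J : ι → ℕ}

/-- Condition (1) of the associated market: worker `w` ranks firm-copies by first ranking their
firms with `PwFirm w`. -/
structure RefinesFirmOrder (Pw : W → LinearOrder (Option (Σ i : ι, Fin (J i))))
    (PwFirm : W → LinearOrder (Option ι)) : Prop where
  lt_of_firm_lt : ∀ (w : W) (i i' : ι) (j : Fin (J i)) (j' : Fin (J i')),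
    (PwFirm w).lt (some i') (some i) → (Pw w).lt (some ⟨i', j'⟩) (some ⟨i, j⟩)
  none_lt_iff : ∀ (w : W) (i : ι) (j : Fin (J i)),
    (PwFirm w).lt none (some i) ↔ (Pw w).lt none (some ⟨i, j⟩)

namespace RefinesFirmOrder

variable {Pw : W → LinearOrder (Option (Σ i : ι, Fin (J i)))} {PwFirm : W → LinearOrder (Option ι)}

lemma fst_eq_of_lt_of_le (hP : RefinesFirmOrder Pw PwFirm)
    {w : W} {i : ι} {j j' : Fin (J i)} {g : Σ i : ι, Fin (J i)}
    (h1 : (Pw w).lt (some ⟨i, j⟩) (some g)) (h2 : (Pw w).le (some g) (some ⟨i, j'⟩)) :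
    g.1 = i := by
  let _ := Pw w
  let _ := PwFirm w
  obtain ⟨i0, j0⟩ := g
  rcases lt_trichotomy (some i0 : Option ι) (some i) with hlt | heq | hlt
  · exact absurd (hP.lt_of_firm_lt w i i0 j j0 hlt) h1.not_gt
  · exact Option.some_injective _ heq
  · exact absurd (hP.lt_of_firm_lt w i0 i j0 j' hlt) h2.not_gt

lemma none_lt_iff_none_lt (hP : RefinesFirmOrder Pw PwFirm) (w : W) {i : ι}
    (j j' : Fin (J i)) : (Pw w).lt none (some ⟨i, j⟩) ↔ (Pw w).lt none (some ⟨i, j'⟩) :=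
  (hP.none_lt_iff w i j).symm.trans (hP.none_lt_iff w i j')

end RefinesFirmOrder

end AssociatedMarket

section DeferredAcceptance

variable {ι W : Type*} {J : ι → ℕ}
  (Pf : (Σ i : ι, Fin (J i)) → LinearOrder (Option W))
  (Pw : W → LinearOrder (Option (Σ i : ι, Fin (J i))))

lemma DAState.ext {st st' : DAState ι W J} (hlam : st.lam = st'.lam) (hrej : st.rej = st'.rej) :
    st = st' := by
  cases st
  cases st'
  congr

structure DAInvariant (st : DAState ι W J) : Prop where
  not_mem_rej : ∀ f w, st.lam f = some w → w ∉ st.rej f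
  firm_acceptable : ∀ f w, st.lam f = some w → (Pf f).le none (some w)
  worker_acceptable : ∀ f w, st.lam f = some w → (Pw w).le none (some f)
  mem_rej_of_lt : ∀ f w w', st.lam f = some w → (Pf f).lt (some w) (some w') → w' ∈ st.rej f
  rejected_for_better : ∀ f w, w ∈ st.rej f →
    (Pw w).lt (some f) none ∨ ∃ g, st.lam g = some w ∧ (Pw w).lt (some f) (some g)
  no_envy : ∀ f (j' : Fin (J f.1)) w w', st.lam f = some w → st.lam ⟨f.1, j'⟩ = some w' →
    ¬ (Pf f).lt (some w) (some w')

lemma DAInvariant.init : DAInvariant Pf Pw (⟨fun _ => none, fun _ => ∅⟩ : DAState ι W J) := by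
  constructor <;> simp

variable {Pf Pw} in
lemma DAInvariant.no_blocking_firm {st : DAState ι W J} (hI : DAInvariant Pf Pw st)
    (f : Σ i : ι, Fin (J i)) :
    ¬ ((Pf f).lt (st.lam f) none ∨
      (st.lam f ≠ none ∧ ∃ j' : Fin (J f.1), (Pf f).lt (st.lam f) (st.lam ⟨f.1, j'⟩))) := by
  let _ := Pf f
  rcases hl : st.lam f with _ | w
  · simp
  have hacc := hI.firm_acceptable f w hl
  rintro (hlt | ⟨-, j', hlt⟩)
  · exact hacc.not_gt hlt
  rcases hl' : st.lam ⟨f.1, j'⟩ with _ | w'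
  · exact hacc.not_gt (hl' ▸ hlt)
  · exact hI.no_envy f j' w w' hl hl' (hl' ▸ hlt)

variable [Fintype ι] [Fintype W]

def rejCount (st : DAState ι W J) : ℕ := ∑ f, (st.rej f).card

def matchedCopies (st : DAState ι W J) : Finset (Σ i : ι, Fin (J i)) :=
  univ.filter fun f => st.lam f ≠ none

/-- Lexicographic in `(rejCount st, #matchedCopies st)`, as `#matchedCopies st` is at most the
number of firm-copies. -/
def potential (st : DAState ι W J) : ℕ :=
  rejCount st * (Fintype.card (Σ i : ι, Fin (J i)) + 1) + (matchedCopies st).card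

lemma potential_lt (st : DAState ι W J) :
    potential st < (Fintype.card (Σ i : ι, Fin (J i)) * Fintype.card W + 1) *
      (Fintype.card (Σ i : ι, Fin (J i)) + Fintype.card W + 2) := by
  have hrej : rejCount st ≤ Fintype.card (Σ i : ι, Fin (J i)) * Fintype.card W := by
    calc rejCount st ≤ ∑ _f : Σ i : ι, Fin (J i), Fintype.card W :=
          sum_le_sum fun f _ => card_le_univ (st.rej f)
      _ = _ := by simp
  have hmatched := card_le_univ (matchedCopies st)
  unfold potential
  generalize Fintype.card (Σ i : ι, Fin (J i)) = a at *
  generalize Fintype.card W = b at *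
  have := Nat.mul_le_mul_right (a + 1) hrej
  have : (a * b + 1) * (a + b + 2) = a * b * (a + 1) + a + (a * b * b + a * b + b + 2) := by ring
  omega

variable [DecidableEq W]

def DAState.remainingOptions (st : DAState ι W J) (f : Σ i : ι, Fin (J i)) :
    Finset (Option W) :=
  insert none ((univ.filter fun w : W => w ∉ st.rej f).image some)

def IsCandidate (st : DAState ι W J) (f : Σ i : ι, Fin (J i)) (w : W) : Prop :=
  proposalF Pf st f = some w ∨ st.lam f = some w

variable {Pf Pw} {PwFirm : W → LinearOrder (Option ι)} {st : DAState ι W J}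
  {f : Σ i : ι, Fin (J i)} {w w' : W}

lemma proposalF_eq_some_iff :
    proposalF Pf st f = some w ↔ st.lam f = none ∧
      bestOf (Pf f) (st.remainingOptions f) = some w ∧
      ∀ (j' : Fin (J f.1)) (w' : W), st.lam ⟨f.1, j'⟩ = some w' →
        ¬ (Pf f).lt (some w) (some w') := by
  unfold proposalF DAState.remainingOptions
  by_cases hl : st.lam f = none
  · rcases bestOf (Pf f) (insert none ((univ.filter fun w : W => w ∉ st.rej f).image some))
      with _ | b
    · simp [hl]
    · simp only [hl, ne_eq, not_true_eq_false, if_false]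
      split_ifs <;> grind
  · simp [hl]

lemma not_mem_rej_of_proposalF_eq_some (h : proposalF Pf st f = some w) : w ∉ st.rej f := by
  simpa using mem_of_bestOf_eq_some _ (proposalF_eq_some_iff.1 h).2.1

lemma le_of_proposalF_eq_some (h : proposalF Pf st f = some w) {x : Option W}
    (hx : x ∈ st.remainingOptions f) : (Pf f).le x (some w) :=
  (proposalF_eq_some_iff.1 h).2.1 ▸ le_bestOf _ hx

namespace IsCandidate

lemma unique (h : IsCandidate Pf st f w) (h' : IsCandidate Pf st f w') : w = w' := by
  rcases h with h | h <;> rcases h' with h' | h'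
  · exact Option.some_injective _ (h.symm.trans h')
  · simp [(proposalF_eq_some_iff.1 h).1] at h'
  · simp [(proposalF_eq_some_iff.1 h').1] at h
  · exact Option.some_injective _ (h.symm.trans h')

lemma not_mem_rej (hc : IsCandidate Pf st f w) (hI : DAInvariant Pf Pw st) : w ∉ st.rej f :=
  hc.elim not_mem_rej_of_proposalF_eq_some (hI.not_mem_rej f w)

lemma firm_acceptable (hc : IsCandidate Pf st f w) (hI : DAInvariant Pf Pw st) :
    (Pf f).le none (some w) :=
  hc.elim (fun hp => le_of_proposalF_eq_some hp (mem_insert_self _ _)) (hI.firm_acceptable f w)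

lemma mem_rej_of_lt (hc : IsCandidate Pf st f w) (hI : DAInvariant Pf Pw st)
    (hlt : (Pf f).lt (some w) (some w')) : w' ∈ st.rej f := by
  let _ := Pf f
  refine hc.elim (fun hp => ?_) (hI.mem_rej_of_lt f w w' · hlt)
  by_contra hw'
  exact (le_of_proposalF_eq_some hp
    (mem_insert_of_mem (mem_image_of_mem _ (mem_filter.2 ⟨mem_univ _, hw'⟩)))).not_gt hlt

lemma not_lt_sibling (hc : IsCandidate Pf st f w) (hI : DAInvariant Pf Pw st)
    {j' : Fin (J f.1)} (h : st.lam ⟨f.1, j'⟩ = some w') : ¬ (Pf f).lt (some w) (some w') :=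
  hc.elim (fun hp => (proposalF_eq_some_iff.1 hp).2.2 j' w' h) (hI.no_envy f j' w w' · h)

end IsCandidate

variable [DecidableEq ι]

lemma isCandidate_of_chosenByWorker_eq_some {g : Σ i : ι, Fin (J i)}
    (h : chosenByWorker Pf Pw st w = some g) : IsCandidate Pf st g w :=
  (mem_filter.1 (mem_of_bestOf_eq_some _ h)).2

lemma le_chosenByWorker (h : IsCandidate Pf st f w) :
    (Pw w).le (some f) (chosenByWorker Pf Pw st w) :=
  some_le_bestOf _ (mem_filter.2 ⟨mem_univ _, h⟩)

lemma none_le_chosenByWorker : (Pw w).le none (chosenByWorker Pf Pw st w) :=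
  none_le_bestOf _ _

lemma stepF_lam_eq_some_iff :
    (stepF Pf Pw st).lam f = some w ↔ chosenByWorker Pf Pw st w = some f := by
  simp only [stepF]
  split_ifs with hex
  · refine ⟨fun h => Option.some_injective _ h ▸ hex.choose_spec, fun h => ?_⟩
    exact congrArg some ((isCandidate_of_chosenByWorker_eq_some hex.choose_spec).unique
      (isCandidate_of_chosenByWorker_eq_some h))
  · exact ⟨nofun, fun h => (hex ⟨w, h⟩).elim⟩

lemma mem_stepF_rej_iff :
    w ∈ (stepF Pf Pw st).rej f ↔
      w ∈ st.rej f ∨ (IsCandidate Pf st f w ∧ chosenByWorker Pf Pw st w ≠ some f) := by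
  simp [stepF, IsCandidate]

lemma rej_subset_stepF_rej (f : Σ i : ι, Fin (J i)) : st.rej f ⊆ (stepF Pf Pw st).rej f :=
  fun _ hw => mem_stepF_rej_iff.2 (Or.inl hw)

lemma exists_better_stepF_of_lt_chosenByWorker
    (h : (Pw w).lt (some f) (chosenByWorker Pf Pw st w)) :
    (Pw w).lt (some f) none ∨
      ∃ g, (stepF Pf Pw st).lam g = some w ∧ (Pw w).lt (some f) (some g) := by
  rcases hch : chosenByWorker Pf Pw st w with _ | g
  · exact Or.inl (hch ▸ h)
  · exact Or.inr ⟨g, stepF_lam_eq_some_iff.2 hch, hch ▸ h⟩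

namespace DAInvariant

lemma rejected_for_better_stepF (hI : DAInvariant Pf Pw st)
    (hw : w ∈ (stepF Pf Pw st).rej f) :
    (Pw w).lt (some f) none ∨
      ∃ g, (stepF Pf Pw st).lam g = some w ∧ (Pw w).lt (some f) (some g) := by
  refine exists_better_stepF_of_lt_chosenByWorker ?_
  let _ := Pw w
  rcases mem_stepF_rej_iff.1 hw with hold | ⟨hc, hne⟩
  · rcases hI.rejected_for_better f w hold with hnone | ⟨g, hg, hlt⟩
    · exact hnone.trans_le none_le_chosenByWorker
    · exact hlt.trans_le (le_chosenByWorker (Or.inr hg))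
  · exact (le_chosenByWorker hc).lt_of_ne (Ne.symm hne)

/-- By condition (1) only a copy of firm `i` can rank between two copies of `i`. -/
lemma exists_sibling_lam_eq (hP : RefinesFirmOrder Pw PwFirm) (hI : DAInvariant Pf Pw st)
    {i : ι} {j j' : Fin (J i)} (hrej : w ∈ st.rej ⟨i, j⟩)
    (hch : chosenByWorker Pf Pw st w = some ⟨i, j'⟩) : ∃ j0, st.lam ⟨i, j0⟩ = some w := by
  let _ := Pw w
  have hacc : (Pw w).le none (some ⟨i, j'⟩) := hch ▸ none_le_chosenByWorker
  rcases hI.rejected_for_better _ w hrej with hnone | ⟨⟨i0, j0⟩, hg, hlt⟩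
  · exact absurd (hacc.lt_of_ne (by simp)) ((hP.none_lt_iff_none_lt w j j').not.1 hnone.not_gt)
  · obtain rfl : i0 = i := hP.fst_eq_of_lt_of_le hlt (hch ▸ le_chosenByWorker (Or.inr hg))
    exact ⟨j0, hg⟩

lemma no_envy_stepF (hP : RefinesFirmOrder Pw PwFirm) (hI : DAInvariant Pf Pw st)
    (f : Σ i : ι, Fin (J i)) (j' : Fin (J f.1)) (w w' : W)
    (hf : (stepF Pf Pw st).lam f = some w) (hg : (stepF Pf Pw st).lam ⟨f.1, j'⟩ = some w') :
    ¬ (Pf f).lt (some w) (some w') := by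
  intro hlt
  have hcf := isCandidate_of_chosenByWorker_eq_some (stepF_lam_eq_some_iff.1 hf)
  have hchg := stepF_lam_eq_some_iff.1 hg
  obtain ⟨j0, hj0⟩ : ∃ j0, st.lam ⟨f.1, j0⟩ = some w' :=
    (isCandidate_of_chosenByWorker_eq_some hchg).elim
      (fun _ => hI.exists_sibling_lam_eq hP (hcf.mem_rej_of_lt hI hlt) hchg)
      (fun h => ⟨j', h⟩)
  exact hcf.not_lt_sibling hI hj0 hlt

lemma step (hP : RefinesFirmOrder Pw PwFirm) (hI : DAInvariant Pf Pw st) :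
    DAInvariant Pf Pw (stepF Pf Pw st) where
  not_mem_rej f w h := by
    have hch := stepF_lam_eq_some_iff.1 h
    rw [mem_stepF_rej_iff, not_or, not_and_not_right]
    exact ⟨(isCandidate_of_chosenByWorker_eq_some hch).not_mem_rej hI, fun _ => hch⟩
  firm_acceptable f w h :=
    (isCandidate_of_chosenByWorker_eq_some (stepF_lam_eq_some_iff.1 h)).firm_acceptable hI
  worker_acceptable f w h := stepF_lam_eq_some_iff.1 h ▸ none_le_chosenByWorker
  mem_rej_of_lt f w w' h hlt := rej_subset_stepF_rej f
    ((isCandidate_of_chosenByWorker_eq_some (stepF_lam_eq_some_iff.1 h)).mem_rej_of_lt hI hlt)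
  rejected_for_better _ _ := hI.rejected_for_better_stepF
  no_envy := hI.no_envy_stepF hP

end DAInvariant

lemma rejCount_le_stepF : rejCount st ≤ rejCount (stepF Pf Pw st) :=
  sum_le_sum fun f _ => card_le_card (rej_subset_stepF_rej f)

lemma stepF_rej_eq_of_rejCount_eq (h : rejCount (stepF Pf Pw st) = rejCount st) :
    (stepF Pf Pw st).rej = st.rej := by
  funext f
  refine (eq_of_subset_of_card_le (rej_subset_stepF_rej f) ?_).symm
  by_contra! hlt
  have := sum_lt_sum (fun g _ => card_le_card (rej_subset_stepF_rej (Pw := Pw) (st := st) g))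
    ⟨f, mem_univ _, hlt⟩
  exact this.ne' h

namespace DAInvariant

lemma stepF_lam_eq_of_rej_eq (hI : DAInvariant Pf Pw st)
    (hrej : (stepF Pf Pw st).rej = st.rej) (h : st.lam f = some w) :
    (stepF Pf Pw st).lam f = some w := by
  by_contra hne
  have hw : w ∈ (stepF Pf Pw st).rej f :=
    mem_stepF_rej_iff.2 (Or.inr ⟨Or.inr h, mt stepF_lam_eq_some_iff.2 hne⟩)
  exact hI.not_mem_rej f w h (hrej ▸ hw)

lemma matchedCopies_ssubset_stepF (hI : DAInvariant Pf Pw st)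
    (hrej : (stepF Pf Pw st).rej = st.rej) (hne : stepF Pf Pw st ≠ st) :
    matchedCopies st ⊂ matchedCopies (stepF Pf Pw st) := by
  have hkept : ∀ f, st.lam f ≠ none → (stepF Pf Pw st).lam f ≠ none := fun f hf => by
    obtain ⟨w, hw⟩ := Option.ne_none_iff_exists'.1 hf
    simp [hI.stepF_lam_eq_of_rej_eq hrej hw]
  obtain ⟨f, hf⟩ : ∃ f, (stepF Pf Pw st).lam f ≠ st.lam f := by
    by_contra! hlam
    exact hne (DAState.ext (funext hlam) hrej)
  have hnew : st.lam f = none := by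
    by_contra hmatched
    obtain ⟨w, hw⟩ := Option.ne_none_iff_exists'.1 hmatched
    exact hf ((hI.stepF_lam_eq_of_rej_eq hrej hw).trans hw.symm)
  refine (ssubset_iff_of_subset fun g hg => ?_).2 ⟨f, ?_, ?_⟩
  · simpa [matchedCopies] using hkept g (by simpa [matchedCopies] using hg)
  · simpa [matchedCopies, hnew] using hf
  · simp [matchedCopies, hnew]

lemma potential_lt_stepF (hI : DAInvariant Pf Pw st) (hne : stepF Pf Pw st ≠ st) :
    potential st < potential (stepF Pf Pw st) := by
  have hcard := card_le_univ (matchedCopies st)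
  unfold potential
  rcases (rejCount_le_stepF (Pf := Pf) (Pw := Pw) (st := st)).lt_or_eq with hlt | heq
  · have := Nat.mul_le_mul_right (Fintype.card (Σ i : ι, Fin (J i)) + 1) hlt
    nlinarith
  · have := card_lt_card
      (hI.matchedCopies_ssubset_stepF (stepF_rej_eq_of_rejCount_eq heq.symm) hne)
    rw [heq]
    omega

end DAInvariant

lemma lam_injective_of_isFixedPt (hfix : IsFixedPt (stepF Pf Pw) st)
    {g : Σ i : ι, Fin (J i)} (hf : st.lam f = some w) (hg : st.lam g = some w) : f = g := by
  rw [← hfix.eq, stepF_lam_eq_some_iff] at hf hg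
  exact Option.some_injective _ (hf.symm.trans hg)

lemma proposalF_eq_none_of_isFixedPt (hfix : IsFixedPt (stepF Pf Pw) st)
    (f : Σ i : ι, Fin (J i)) : proposalF Pf st f = none := by
  by_contra hp
  obtain ⟨w, hp⟩ := Option.ne_none_iff_exists'.1 hp
  by_cases hch : chosenByWorker Pf Pw st w = some f
  · have := hfix.eq ▸ stepF_lam_eq_some_iff.2 hch
    simp [(proposalF_eq_some_iff.1 hp).1] at this
  · have hw : w ∈ (stepF Pf Pw st).rej f := mem_stepF_rej_iff.2 (Or.inr ⟨Or.inl hp, hch⟩)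
    exact not_mem_rej_of_proposalF_eq_some hp (hfix.eq ▸ hw)

/-- At a fixed point a copy `f` no longer proposes: it is matched, has no acceptable worker left,
or is barred by a sibling holding a worker that `f` prefers to its best remaining option. -/
lemma DAInvariant.exists_sibling_le_of_not_mem_rej (hI : DAInvariant Pf Pw st)
    (hfix : IsFixedPt (stepF Pf Pw) st) (hw : w ∉ st.rej f) :
    ∃ j' : Fin (J f.1), (Pf f).le (some w) (st.lam ⟨f.1, j'⟩) := by
  let _ := Pf f
  rcases hl : st.lam f with _ | w0
  · have hle : some w ≤ bestOf (Pf f) (st.remainingOptions f) :=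
      some_le_bestOf _ (mem_filter.2 ⟨mem_univ _, hw⟩)
    rcases hb : bestOf (Pf f) (st.remainingOptions f) with _ | w1
    · exact ⟨f.2, by rw [hl, ← hb]; exact hle⟩
    · obtain ⟨j2, w2, h2, hlt⟩ :
          ∃ j2 w2, st.lam ⟨f.1, j2⟩ = some w2 ∧ (Pf f).lt (some w1) (some w2) := by
        by_contra hbarred
        simpa [proposalF_eq_none_of_isFixedPt hfix f] using proposalF_eq_some_iff.2
          ⟨hl, hb, fun j2 w2 h2 hlt => hbarred ⟨j2, w2, h2, hlt⟩⟩
      exact ⟨j2, h2 ▸ (hb ▸ hle).trans hlt.le⟩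
  · exact ⟨f.2, hl ▸ not_lt.1 fun hlt => hw (hI.mem_rej_of_lt f w0 w hl hlt)⟩

noncomputable def DAState.partner (st : DAState ι W J) (w : W) : Option (Σ i : ι, Fin (J i)) :=
  if h : ∃ f, st.lam f = some w then some h.choose else none

lemma partner_eq_some_iff (hfix : IsFixedPt (stepF Pf Pw) st) :
    st.partner w = some f ↔ st.lam f = some w := by
  unfold DAState.partner
  split_ifs with hex
  · exact ⟨fun h => Option.some_injective _ h ▸ hex.choose_spec,
      fun h => congrArg some (lam_injective_of_isFixedPt hfix hex.choose_spec h)⟩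
  · exact ⟨nofun, fun h => (hex ⟨f, h⟩).elim⟩

namespace DAInvariant

lemma not_lt_partner_none (hI : DAInvariant Pf Pw st) (hfix : IsFixedPt (stepF Pf Pw) st)
    (w : W) : ¬ (Pw w).lt (st.partner w) none := by
  let _ := Pw w
  rcases hp : st.partner w with _ | f
  · exact lt_irrefl _
  · exact (hI.worker_acceptable f w ((partner_eq_some_iff hfix).1 hp)).not_gt

lemma no_blocking_pair (hI : DAInvariant Pf Pw st) (hfix : IsFixedPt (stepF Pf Pw) st)
    (f : Σ i : ι, Fin (J i)) (w : W) :
    ¬ ((Pw w).lt (st.partner w) (some f) ∧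
      ∀ j' : Fin (J f.1), (Pf f).lt (st.lam ⟨f.1, j'⟩) (some w)) := by
  rintro ⟨hblk, hall⟩
  have hw : w ∉ st.rej f := by
    intro hrej
    let _ := Pw w
    rcases hI.rejected_for_better f w hrej with hnone | ⟨g, hg, hlt⟩
    · exact hI.not_lt_partner_none hfix w (hblk.trans hnone)
    · rw [(partner_eq_some_iff hfix).2 hg] at hblk
      exact hblk.not_gt hlt
  obtain ⟨j', hle⟩ := hI.exists_sibling_le_of_not_mem_rej hfix hw
  let _ := Pf f
  exact (hall j').not_ge hle

end DAInvariant

variable (Pf Pw) in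
noncomputable def daFinalState : DAState ι W J :=
  (stepF Pf Pw)^[(Fintype.card (Σ i : ι, Fin (J i)) * Fintype.card W + 1) *
      (Fintype.card (Σ i : ι, Fin (J i)) + Fintype.card W + 2)]
    ⟨fun _ => none, fun _ => ∅⟩

lemma daOutputF_eq_lam : daOutputF Pf Pw = (daFinalState Pf Pw).lam := rfl

lemma daOutputFW_eq_partner : daOutputFW Pf Pw = (daFinalState Pf Pw).partner := rfl

lemma daInvariant_daFinalState (hP : RefinesFirmOrder Pw PwFirm) :
    DAInvariant Pf Pw (daFinalState Pf Pw) := by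
  unfold daFinalState
  exact Iterate.rec _ (DAInvariant.init Pf Pw) (fun _ => DAInvariant.step hP) _

lemma isFixedPt_daFinalState (hP : RefinesFirmOrder Pw PwFirm) :
    IsFixedPt (stepF Pf Pw) (daFinalState Pf Pw) :=
  isFixedPt_iterate_of_potential (fun _ => DAInvariant.step hP)
    (fun _ hI => hI.potential_lt_stepF) potential_lt (DAInvariant.init Pf Pw)

end DeferredAcceptance

variable {ι W : Type*} [Fintype ι] [DecidableEq ι] [Fintype W] [DecidableEq W]
  {J : ι → ℕ}

theorem daOutputF_stableStar_general
    (Pf : (Σ i : ι, Fin (J i)) → LinearOrder (Option W))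
    (Pw : W → LinearOrder (Option (Σ i : ι, Fin (J i))))
    (PwFirm : W → LinearOrder (Option ι))
    -- condition (1): copies of a more preferred firm rank above copies of a
    -- less preferred firm
    (hcond1 : ∀ (w : W) (i i' : ι) (j : Fin (J i)) (j' : Fin (J i')),
      (PwFirm w).lt (some i') (some i) →
        (Pw w).lt (some ⟨i', j'⟩) (some ⟨i, j⟩))
    -- condition (1) for ∅: a firm is acceptable iff its copies are
    (hcond0 : ∀ (w : W) (i : ι) (j : Fin (J i)),
      ((PwFirm w).lt none (some i) ↔ (Pw w).lt none (some ⟨i, j⟩))) :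
    -- λ_F is a one-to-one matching
    (∀ (f : Σ i : ι, Fin (J i)) (w : W),
      daOutputF Pf Pw f = some w ↔ daOutputFW Pf Pw w = some f) ∧
    -- no worker blocks*
    (∀ w : W, ¬ (Pw w).lt (daOutputFW Pf Pw w) none) ∧
    -- no firm-copy blocks*: individual rationality and no envy among copies
    (∀ f : Σ i : ι, Fin (J i),
      ¬ ((Pf f).lt (daOutputF Pf Pw f) none ∨
        (daOutputF Pf Pw f ≠ none ∧
          ∃ j' : Fin (J f.1), (Pf f).lt (daOutputF Pf Pw f) (daOutputF Pf Pw ⟨f.1, j'⟩)))) ∧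
    -- no blocking* pair
    (∀ (f : Σ i : ι, Fin (J i)) (w : W),
      ¬ ((Pw w).lt (daOutputFW Pf Pw w) (some f) ∧
        ∀ j' : Fin (J f.1), (Pf f).lt (daOutputF Pf Pw ⟨f.1, j'⟩) (some w))) := by
  have hP : RefinesFirmOrder Pw PwFirm := ⟨hcond1, hcond0⟩
  have hI := daInvariant_daFinalState (Pf := Pf) hP
  have hfix := isFixedPt_daFinalState (Pf := Pf) hP
  rw [daOutputF_eq_lam, daOutputFW_eq_partner]
  exact ⟨fun f w => (partner_eq_some_iff hfix).symm, hI.not_lt_partner_none hfix,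
    hI.no_blocking_firm, hI.no_blocking_pair hfix⟩

/-- Theorem 1: the output `λ_F` of the adapted
firm-copies-proposing deferred acceptance algorithm is a (well-defined)
stable* matching; in particular the set of stable* matchings of the associated
one-to-one market is nonempty. -/
theorem daOutputF_stableStar
    (Pf : (Σ i : ι, Fin (J i)) → LinearOrder (Option W))
    (Pw : W → LinearOrder (Option (Σ i : ι, Fin (J i))))
    (PwFirm : W → LinearOrder (Option ι))
    -- condition (1): copies of a more preferred firm rank above copies of a
    -- less preferred firm
    (hcond1 : ∀ (w : W) (i i' : ι) (j : Fin (J i)) (j' : Fin (J i')),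
      (PwFirm w).lt (some i') (some i) →
        (Pw w).lt (some ⟨i', j'⟩) (some ⟨i, j⟩))
    -- condition (1) for ∅: a firm is acceptable iff its copies are
    (hcond0 : ∀ (w : W) (i : ι) (j : Fin (J i)),
      ((PwFirm w).lt none (some i) ↔ (Pw w).lt none (some ⟨i, j⟩)))
    -- condition (2): copies of the same firm are ranked by index
    (hcond2 : ∀ (w : W) (i : ι) (j j' : Fin (J i)),
      ((Pw w).lt (some ⟨i, j'⟩) (some ⟨i, j⟩) ↔ (j : ℕ) < (j' : ℕ))) :
    -- λ_F is a one-to-one matching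
    (∀ (f : Σ i : ι, Fin (J i)) (w : W),
      daOutputF Pf Pw f = some w ↔ daOutputFW Pf Pw w = some f) ∧
    -- no worker blocks*
    (∀ w : W, ¬ (Pw w).lt (daOutputFW Pf Pw w) none) ∧
    -- no firm-copy blocks*: individual rationality and no envy among copies
    (∀ f : Σ i : ι, Fin (J i),
      ¬ ((Pf f).lt (daOutputF Pf Pw f) none ∨
        (daOutputF Pf Pw f ≠ none ∧
          ∃ j' : Fin (J f.1), (Pf f).lt (daOutputF Pf Pw f) (daOutputF Pf Pw ⟨f.1, j'⟩)))) ∧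
    -- no blocking* pair
    (∀ (f : Σ i : ι, Fin (J i)) (w : W),
      ¬ ((Pw w).lt (daOutputFW Pf Pw w) (some f) ∧
        ∀ j' : Fin (J f.1), (Pf f).lt (daOutputF Pf Pw ⟨f.1, j'⟩) (some w))) :=
  daOutputF_stableStar_general Pf Pw PwFirm hcond1 hcond0
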